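/- arXiv:1602.00208 — 4 statements merged into one kernel-verified Lean document; each statement's English description precedes it below -/
import Mathlib

section
/- Let q be a prime power and f(x) = c_1 x^{a_1} + ... + c_t x^{a_t} ∈ F_q[x] with all c_i nonzero. If f vanishes on every element of a coset of the subgroup of order k in F_q^* (where k divides q-1), then for every index i ∈ {1,...,t} there exists j ≠ i with a_i ≡ a_j (mod k). -/
open Polynomial

theorem stmt0 (F : Type*) [Field F] [Fintype F]
    (t : ℕ) (c : Fin t → F) (a : Fin t → ℕ)
    (hc : ∀ i, c i ≠ 0) (ha : Function.Injective a)
    (f : Polynomial F) (hf : f = ∑ i, C (c i) * X ^ a i)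
    (k : ℕ) (hk0 : 0 < k) (hk : k ∣ Fintype.card F - 1)
    (α : F) (hα : α ≠ 0)
    (hvan : ∀ x : F, x ^ k = α ^ k → f.eval x = 0) :
    ∀ i, ∃ j, j ≠ i ∧ a i ≡ a j [MOD k] := by
  intro i
  classical
  by_contra hcon
  push_neg at hcon
  -- the grouped coefficients
  set b : ℕ → F := fun r => ∑ j ∈ Finset.univ.filter (fun j => a j % k = r), c j * α ^ a j
    with hb
  set g : Polynomial F := ∑ r ∈ Finset.range k, C (b r) * X ^ r with hg
  -- every k-th root of unity is a root of g
  have hgroot : ∀ ζ : F, ζ ^ k = 1 → g.eval ζ = 0 := by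
    intro ζ hζ
    have hζn : ∀ n : ℕ, ζ ^ (n % k) = ζ ^ n := by
      intro n
      conv_rhs => rw [← Nat.div_add_mod n k]
      rw [pow_add, pow_mul, hζ, one_pow, one_mul]
    have hev : f.eval (α * ζ) = 0 := by
      apply hvan
      rw [mul_pow, hζ, mul_one]
    calc g.eval ζ = ∑ r ∈ Finset.range k, b r * ζ ^ r := by
          simp [hg, eval_finset_sum]
      _ = ∑ r ∈ Finset.range k, ∑ j ∈ Finset.univ.filter (fun j => a j % k = r),
            (c j * α ^ a j * ζ ^ (a j % k)) := by
          refine Finset.sum_congr rfl fun r _ => ?_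
          rw [hb, Finset.sum_mul]
          refine Finset.sum_congr rfl fun j hj => ?_
          rw [Finset.mem_filter] at hj
          rw [hj.2]
      _ = ∑ j, c j * α ^ a j * ζ ^ (a j % k) :=
          Finset.sum_fiberwise_of_maps_to
            (fun j _ => Finset.mem_range.mpr (Nat.mod_lt _ hk0)) _
      _ = f.eval (α * ζ) := by
          rw [hf, eval_finset_sum]
          refine Finset.sum_congr rfl fun j _ => ?_
          rw [hζn, eval_mul, eval_C, eval_pow, eval_X, mul_pow, mul_assoc]
      _ = 0 := hev
  -- the fiber of a i % k is {i}
  have hfib : Finset.univ.filter (fun j => a j % k = a i % k) = {i} := by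
    ext j
    simp only [Finset.mem_filter, Finset.mem_univ, true_and, Finset.mem_singleton]
    constructor
    · intro hj
      by_contra hji
      exact hcon j hji hj.symm
    · rintro rfl; rfl
  -- so b (a i % k) ≠ 0
  have hbne : b (a i % k) ≠ 0 := by
    rw [hb]
    simp only [hfib, Finset.sum_singleton]
    exact mul_ne_zero (hc i) (pow_ne_zero _ hα)
  -- g has coefficient b r at r for r < k
  have hcoeff : g.coeff (a i % k) = b (a i % k) := by
    rw [hg, finset_sum_coeff]
    rw [Finset.sum_eq_single (a i % k)]
    · simp
    · intro r _ hr
      simp [coeff_C_mul, coeff_X_pow, Ne.symm hr]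
    · intro h
      exact absurd (Finset.mem_range.mpr (Nat.mod_lt _ hk0)) h
  have hgne : g ≠ 0 := fun h => hbne (by rw [← hcoeff, h, coeff_zero])
  -- degree bound
  have hdeg : g.natDegree < k := by
    have : g.natDegree ≤ k - 1 := by
      apply Polynomial.natDegree_sum_le_of_forall_le
      intro r hr
      refine (Polynomial.natDegree_C_mul_X_pow_le _ _).trans ?_
      have := Finset.mem_range.mp hr
      omega
    omega
  -- primitive root: card of nthRootsFinset = k
  obtain ⟨u, hu⟩ := IsCyclic.exists_ofOrder_eq_natCard (α := Fˣ)
  have hcard : orderOf u = Fintype.card F - 1 := by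
    rw [hu, Nat.card_eq_fintype_card, Fintype.card_units]
  have hune : orderOf u ≠ 0 := by
    rw [hcard]
    have : 1 < Fintype.card F := Fintype.one_lt_card
    omega
  have hkdvd : k ∣ orderOf u := hcard ▸ hk
  have hord : orderOf (u ^ (orderOf u / k)) = k := orderOf_pow_orderOf_div hune hkdvd
  have hprim' : IsPrimitiveRoot (u ^ (orderOf u / k)) k := by
    have h := IsPrimitiveRoot.orderOf (u ^ (orderOf u / k))
    rwa [hord] at h
  have hprim : IsPrimitiveRoot ((u ^ (orderOf u / k) : Fˣ) : F) k :=
    IsPrimitiveRoot.coe_units_iff.mpr hprim'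
  have hcardroots : (Polynomial.nthRootsFinset k (1 : F)).card = k := hprim.card_nthRootsFinset
  -- nthRootsFinset ⊆ roots of g
  have hsub : Polynomial.nthRootsFinset k (1 : F) ⊆ g.roots.toFinset := by
    intro ζ hζ
    rw [Polynomial.mem_nthRootsFinset hk0 (1 : F)] at hζ
    rw [Multiset.mem_toFinset, Polynomial.mem_roots hgne]
    exact hgroot ζ hζ
  have : k ≤ g.natDegree := by
    calc k = (Polynomial.nthRootsFinset k (1 : F)).card := hcardroots.symm
      _ ≤ g.roots.toFinset.card := Finset.card_le_card hsub
      _ ≤ Multiset.card g.roots := Multiset.toFinset_card_le _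
      _ ≤ g.natDegree := Polynomial.card_roots' g
  omega
end

section
/- Let q be a prime power and f(x) = c_1 x^{a_1} + ... + c_t x^{a_t} ∈ F_q[x] with all c_i nonzero, t ≥ 1, and suppose there exists an index i such that the remainder r_i = a_i mod k differs from r_j = a_j mod k for all j ≠ i (for some divisor k of q-1). Then for every β ∈ F_q^*, the binomial x^k − β does not divide f. -/
open Polynomial

theorem stmt3 (F : Type*) [Field F] [Fintype F]
    (t : ℕ) (ht : 1 ≤ t) (c : Fin t → F) (a : Fin t → ℕ)
    (hc : ∀ i, c i ≠ 0) (ha : Function.Injective a)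
    (f : Polynomial F) (hf : f = ∑ i, C (c i) * X ^ a i)
    (k : ℕ) (hk0 : 0 < k) (hk : k ∣ Fintype.card F - 1)
    (hi : ∃ i, ∀ j, j ≠ i → a i % k ≠ a j % k) :
    ∀ β : F, β ≠ 0 → ¬ (X ^ k - C β ∣ f) := by
  intro β hβ hdvd
  obtain ⟨i, hi⟩ := hi
  set g : Polynomial F := ∑ j, C (c j * β ^ (a j / k)) * X ^ (a j % k) with hg
  have hdg : X ^ k - C β ∣ f - g := by
    rw [hf, hg, ← Finset.sum_sub_distrib]
    apply Finset.dvd_sum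
    intro j _
    have : C (c j) * X ^ a j - C (c j * β ^ (a j / k)) * X ^ (a j % k)
        = C (c j) * (((X ^ k) ^ (a j / k) - (C β) ^ (a j / k)) * X ^ (a j % k)) := by
      have hX : (X : Polynomial F) ^ a j = (X ^ k) ^ (a j / k) * X ^ (a j % k) := by
        rw [← pow_mul, ← pow_add, Nat.div_add_mod]
      rw [hX, map_mul, map_pow]
      ring
    rw [this]
    exact Dvd.dvd.mul_left (Dvd.dvd.mul_right (sub_dvd_pow_sub_pow _ _ _) _) _
  have hdgg : X ^ k - C β ∣ g := (dvd_sub_right hdvd).mp hdg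
  have hglt : g.natDegree < k := by
    rcases eq_or_ne g 0 with h0 | h0
    · rw [h0, natDegree_zero]; exact hk0
    have : g.natDegree ≤ k - 1 := by
      apply natDegree_sum_le_of_forall_le
      intro j _
      calc (C (c j * β ^ (a j / k)) * X ^ (a j % k)).natDegree
          ≤ (C (c j * β ^ (a j / k))).natDegree + (X ^ (a j % k) : Polynomial F).natDegree :=
            natDegree_mul_le
        _ ≤ a j % k := by simp only [natDegree_C, natDegree_X_pow, zero_add, le_refl]
        _ ≤ k - 1 := Nat.le_sub_one_of_lt (Nat.mod_lt _ hk0)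
    omega
  have hg0 : g = 0 := by
    apply eq_zero_of_dvd_of_natDegree_lt hdgg
    rwa [natDegree_X_pow_sub_C]
  have := congrArg (fun p => Polynomial.coeff p (a i % k)) hg0
  simp only [hg, finset_sum_coeff, coeff_C_mul, coeff_X_pow, coeff_zero] at this
  rw [Finset.sum_eq_single i] at this
  · simp only [if_pos rfl, if_true, mul_one] at this
    exact (mul_ne_zero (hc i) (pow_ne_zero _ hβ)) this
  · intro j _ hj
    rw [if_neg (hi j hj), mul_zero]
  · intro h; exact absurd (Finset.mem_univ i) h
end

section
/- Fix natural numbers a_1, ..., a_t and N ≥ 1. If 1 < n ≤ N / gcd(a_1, ..., a_t, N), then there is an integer e with 1 ≤ e ≤ n−1 and a vector v ∈ N·Z^t such that 0 < max_{1 ≤ i ≤ t} |e·a_i + v_i| ≤ N / n^{1/t}. -/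
theorem stmt4 (t N n : ℕ) (ht : 0 < t) (hN : 1 ≤ N) (a : Fin t → ℕ)
    (hn1 : 1 < n) (hn : n ≤ N / Nat.gcd (Finset.univ.gcd a) N) :
    ∃ e : ℕ, 1 ≤ e ∧ e ≤ n - 1 ∧
      ∃ v : Fin t → ℤ, (∀ i, (N : ℤ) ∣ v i) ∧
        (∃ i, (e : ℤ) * (a i : ℤ) + v i ≠ 0) ∧
        ∀ i, ((|(e : ℤ) * (a i : ℤ) + v i| : ℤ) : ℝ) ≤
          (N : ℝ) / (n : ℝ) ^ ((1 : ℝ) / (t : ℝ)) := by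
  classical
  haveI : NeZero N := ⟨by omega⟩
  set r : ℝ := (n : ℝ) ^ ((1 : ℝ) / (t : ℝ)) with hr
  have hn0 : (0:ℝ) < n := by positivity
  have hrpos : 0 < r := Real.rpow_pos_of_pos hn0 _
  have hr1 : 1 < r := by
    rw [hr]
    apply (Real.one_lt_rpow_iff_of_pos hn0).mpr
    left
    exact ⟨by exact_mod_cast hn1, div_pos one_pos (by exact_mod_cast ht)⟩
  set B : ℝ := N / r with hB
  have hB0 : 0 ≤ B := by positivity
  set b : ℕ := ⌊B⌋₊ with hb
  have hbB : (b:ℝ) ≤ B := Nat.floor_le hB0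
  have hBb1 : B < b + 1 := Nat.lt_floor_add_one B
  have hbN : b + 1 ≤ N := by
    have h1 : B < N := by
      rw [hB]
      calc (N:ℝ) / r < N / 1 := by
            apply div_lt_div_of_pos_left _ _ hr1
            · exact_mod_cast hN
            · exact one_pos
        _ = N := div_one _
    have h2 : (b:ℝ) < N := lt_of_le_of_lt hbB h1
    have : b < N := by exact_mod_cast h2
    omega
  have hrt : r ^ t = (n:ℝ) := by
    rw [hr, ← Real.rpow_natCast ((n:ℝ) ^ ((1:ℝ)/(t:ℝ))) t, ← Real.rpow_mul (le_of_lt hn0),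
      one_div, inv_mul_cancel₀ (by exact_mod_cast ht.ne' : (t:ℝ) ≠ 0), Real.rpow_one]
  have hcardR : (N:ℝ) ^ t < (n:ℝ) * ((b:ℝ) + 1) ^ t := by
    have h1 : (N:ℝ) < ((b:ℝ) + 1) * r := by
      rw [← div_lt_iff₀ hrpos]
      exact hBb1
    have h2 : (N:ℝ) ^ t < (((b:ℝ) + 1) * r) ^ t :=
      pow_lt_pow_left₀ h1 (by positivity) ht.ne'
    rw [mul_pow, hrt, mul_comm] at h2
    exact h2
  have hcard : N ^ t < n * (b + 1) ^ t := by
    have := hcardR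
    push_cast at this
    exact_mod_cast this
  -- pigeonhole setup
  set S : Finset (ℕ × (Fin t → ℕ)) :=
    Finset.range n ×ˢ Fintype.piFinset (fun _ => Finset.range (b+1)) with hS
  set f : ℕ × (Fin t → ℕ) → (Fin t → ZMod N) :=
    fun p i => ((p.1 * a i : ℕ) : ZMod N) - ((p.2 i : ℕ) : ZMod N) with hf
  have hcard2 : (Finset.univ : Finset (Fin t → ZMod N)).card < S.card := by
    rw [Finset.card_univ, hS, Finset.card_product, Fintype.card_piFinset, Finset.card_range]
    simp only [Finset.card_range, Finset.prod_const, Finset.card_univ, Fintype.card_fin]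
    rw [Fintype.card_fun, ZMod.card, Fintype.card_fin]
    exact hcard
  obtain ⟨p, hp, q, hq, hne, hfeq⟩ :=
    Finset.exists_ne_map_eq_of_card_lt_of_maps_to hcard2 (fun p _ => Finset.mem_univ (f p))
  have key : ∀ u w : ℕ × (Fin t → ℕ), u ∈ S → w ∈ S → f u = f w → u.1 < w.1 →
      ∃ e : ℕ, 1 ≤ e ∧ e ≤ n - 1 ∧
      ∃ v : Fin t → ℤ, (∀ i, (N : ℤ) ∣ v i) ∧
        (∃ i, (e : ℤ) * (a i : ℤ) + v i ≠ 0) ∧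
        ∀ i, ((|(e : ℤ) * (a i : ℤ) + v i| : ℤ) : ℝ) ≤ B := by
    intro u w hu hw hfeq hlt
    obtain ⟨hu1, hu2⟩ := Finset.mem_product.mp hu
    obtain ⟨hw1, hw2⟩ := Finset.mem_product.mp hw
    rw [Finset.mem_range] at hu1 hw1
    have hcu : ∀ i, u.2 i < b + 1 := fun i =>
      Finset.mem_range.mp (Fintype.mem_piFinset.mp hu2 i)
    have hcw : ∀ i, w.2 i < b + 1 := fun i =>
      Finset.mem_range.mp (Fintype.mem_piFinset.mp hw2 i)
    set d : ℕ := w.1 - u.1 with hd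
    have hdcast : (d:ℤ) = (w.1:ℤ) - u.1 := by
      rw [hd]; omega
    set v : Fin t → ℤ := fun i => ((w.2 i : ℤ) - (u.2 i : ℤ)) - (d:ℤ) * (a i : ℤ) with hv
    have heq : ∀ i, (d:ℤ) * (a i : ℤ) + v i = (w.2 i : ℤ) - (u.2 i : ℤ) := by
      intro i; rw [hv]; ring
    have hdvd : ∀ i, (N:ℤ) ∣ v i := by
      intro i
      have h1 := congrFun hfeq i
      simp only [hf] at h1
      have h2 : (((u.1:ℤ) * (a i:ℤ) - (u.2 i:ℤ) : ℤ) : ZMod N)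
          = (((w.1:ℤ) * (a i:ℤ) - (w.2 i:ℤ) : ℤ) : ZMod N) := by
        push_cast
        push_cast at h1
        exact h1
      have h3 := (ZMod.intCast_eq_intCast_iff _ _ _).mp h2
      have h4 := Int.ModEq.dvd h3
      -- h4 : (N:ℤ) ∣ (w-side) - (u-side)
      have h5 : ((w.1:ℤ) * (a i:ℤ) - (w.2 i:ℤ)) - ((u.1:ℤ) * (a i:ℤ) - (u.2 i:ℤ)) = -(v i) := by
        rw [hv, hdcast]; ring
      rw [h5] at h4
      exact (dvd_neg).mp h4
    refine ⟨d, by omega, by omega, v, hdvd, ?_, ?_⟩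
    · -- nonzero coordinate
      by_contra hall
      push_neg at hall
      have hΔ0 : ∀ i, (w.2 i : ℤ) = (u.2 i : ℤ) := by
        intro i
        have := hall i
        rw [heq i] at this
        omega
      have hdvd2 : ∀ i, N ∣ d * a i := by
        intro i
        have h1 := hdvd i
        have h2 : v i = -((d * a i : ℕ) : ℤ) := by
          simp only [hv]
          rw [hΔ0 i]; push_cast; ring
        rw [h2, dvd_neg] at h1
        exact_mod_cast h1
      have hg1 : N ∣ d * Finset.univ.gcd a := by
        have h1 : N ∣ Finset.univ.gcd (fun i => d * a i) :=
          Finset.dvd_gcd (fun i _ => hdvd2 i)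
        rwa [Finset.gcd_mul_left, normalize_eq] at h1
      have hg2 : N ∣ d * Nat.gcd (Finset.univ.gcd a) N := by
        rw [← Nat.gcd_mul_left]
        exact Nat.dvd_gcd hg1 (dvd_mul_left N d)
      set g : ℕ := Nat.gcd (Finset.univ.gcd a) N with hg
      have hgN : g ∣ N := Nat.gcd_dvd_right _ _
      have hgpos : 0 < g := Nat.gcd_pos_of_pos_right _ (by omega)
      have hNdg : N / g ∣ d := by
        have h1 : (N / g) * g ∣ d * g := by
          rw [Nat.div_mul_cancel hgN]
          exact hg2
        exact (Nat.mul_dvd_mul_iff_right hgpos).mp h1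
      have hd1 : 0 < d := by omega
      have h2 : N / g ≤ d := Nat.le_of_dvd hd1 hNdg
      omega
    · intro i
      have h5 : |(d:ℤ) * (a i : ℤ) + v i| ≤ (b:ℤ) := by
        rw [heq i, abs_le]
        have h6 := hcu i
        have h7 := hcw i
        omega
      calc ((|(d:ℤ) * (a i : ℤ) + v i| : ℤ) : ℝ) ≤ (b:ℝ) := by exact_mod_cast h5
        _ ≤ B := hbB
  rcases lt_trichotomy p.1 q.1 with h | h | h
  · exact key p q hp hq hfeq h
  · exfalso
    apply hne
    have hc : p.2 = q.2 := by
      funext i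
      have h1 := congrFun hfeq i
      simp only [hf, h] at h1
      have h2 : ((p.2 i : ℕ) : ZMod N) = ((q.2 i : ℕ) : ZMod N) := by
        have := sub_right_injective h1
        exact this
      have h3 := (ZMod.natCast_eq_natCast_iff _ _ _).mp h2
      have hcp : p.2 i < b + 1 :=
        Finset.mem_range.mp (Fintype.mem_piFinset.mp (Finset.mem_product.mp hp).2 i)
      have hcq : q.2 i < b + 1 :=
        Finset.mem_range.mp (Fintype.mem_piFinset.mp (Finset.mem_product.mp hq).2 i)
      have h4 : p.2 i % N = q.2 i % N := h3
      rw [Nat.mod_eq_of_lt (by omega), Nat.mod_eq_of_lt (by omega)] at h4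
      exact h4
    exact Prod.ext h hc
  · exact key q p hq hp hfeq.symm h
end

section
/- Let q be a prime power and let F(q) be the set of polynomials over F_q of degree less than q−1 (so |F(q)| = q^{q−1}, counting coefficient vectors). The number of f ∈ F(q) that vanish identically on some nontrivial coset of a subgroup of F_q^* is at most Σ_{p prime, p | q−1} ((q−1)/p) · q^{q−1−p}; consequently the proportion of such f is at most Σ_{p | q−1, p prime} q^{1−p} ≤ 1/q + (log q)/q^2. -/
open Polynomial Finset

section auxmain
variable {F : Type*} [Field F] [Fintype F] [DecidableEq F]

private noncomputable def evalLM (n : ℕ) (R : Finset F) : (Fin n → F) →ₗ[F] (R → F) where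
  toFun v x := ∑ i, v i * (x : F) ^ (i : ℕ)
  map_add' v w := by funext x; simp [add_mul, Finset.sum_add_distrib]
  map_smul' c v := by funext x; simp [Finset.mul_sum, mul_assoc]

private lemma evalLM_surj (n : ℕ) (R : Finset F) (hR : R.card ≤ n) :
    Function.Surjective (evalLM n R) := by
  intro g
  rcases R.eq_empty_or_nonempty with rfl | hne
  · exact ⟨0, funext fun x => absurd x.2 (Finset.notMem_empty _)⟩
  have hn : 0 < n := lt_of_lt_of_le (Finset.card_pos.2 hne) hR
  set g' : F → F := fun x => if h : x ∈ R then g ⟨x, h⟩ else 0 with hg'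
  set P : F[X] := Lagrange.interpolate R id g' with hP
  have hdeg : P.natDegree < n := by
    rcases eq_or_ne P 0 with h0 | h0
    · simpa [h0] using hn
    rw [Polynomial.natDegree_lt_iff_degree_lt h0]
    exact lt_of_lt_of_le (Lagrange.degree_interpolate_lt _ (Set.injOn_id _))
      (by exact_mod_cast hR)
  refine ⟨fun i => P.coeff i, funext fun x => ?_⟩
  have hev : P.eval (x : F) = g x := by
    have := Lagrange.eval_interpolate_at_node g' (Set.injOn_id _) x.2
    simpa [hg', x.2, hP] using this
  calc (evalLM n R) (fun i => P.coeff i) x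
      = ∑ i : Fin n, P.coeff i * (x : F) ^ (i : ℕ) := rfl
    _ = ∑ i ∈ Finset.range n, P.coeff i * (x : F) ^ i :=
        Fin.sum_univ_eq_sum_range (fun i => P.coeff i * (x : F) ^ i) n
    _ = P.eval (x : F) := (Polynomial.eval_eq_sum_range' hdeg _).symm
    _ = g x := hev

private lemma card_vanishing (n : ℕ) (R : Finset F) (hR : R.card ≤ n) :
    Nat.card {v : Fin n → F // ∀ x ∈ R, ∑ i, v i * x ^ (i : ℕ) = 0}
      = Fintype.card F ^ (n - R.card) := by
  have hker : ∀ v : Fin n → F, (∀ x ∈ R, ∑ i, v i * x ^ (i : ℕ) = 0)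
      ↔ v ∈ LinearMap.ker (evalLM n R) := by
    intro v
    constructor
    · intro h; ext x; exact h x x.2
    · intro h x hx; exact congrFun h ⟨x, hx⟩
  have h1 : Nat.card {v : Fin n → F // ∀ x ∈ R, ∑ i, v i * x ^ (i : ℕ) = 0}
      = Nat.card (LinearMap.ker (evalLM n R)) := by
    apply Nat.card_congr
    exact Equiv.subtypeEquivRight hker
  rw [h1]
  have hquot : Nat.card ((Fin n → F) ⧸ LinearMap.ker (evalLM n R)) = Nat.card (R → F) :=
    Nat.card_congr ((evalLM n R).quotKerEquivOfSurjective (evalLM_surj n R hR)).toEquiv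
  have htot := Submodule.card_eq_card_quotient_mul_card (LinearMap.ker (evalLM n R))
  rw [hquot] at htot
  have hdom : Nat.card (Fin n → F) = Fintype.card F ^ n := by
    simp [Nat.card_eq_fintype_card]
  have hcod : Nat.card (R → F) = Fintype.card F ^ R.card := by
    simp [Nat.card_eq_fintype_card]
  rw [hdom, hcod] at htot
  have hq0 : 0 < Fintype.card F := Fintype.card_pos
  have : Fintype.card F ^ R.card * Fintype.card F ^ (n - R.card)
      = Fintype.card F ^ R.card * Nat.card (LinearMap.ker (evalLM n R)) := by
    rw [← pow_add, Nat.add_sub_cancel' hR, htot, mul_comm]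
  exact (Nat.eq_of_mul_eq_mul_left (pow_pos hq0 _) this).symm

private lemma exists_pow_root {p m : ℕ} (hm : 0 < m) (hcard : Fintype.card Fˣ = p * m)
    (u : Fˣ) (hu : u ^ m = 1) : ∃ a : Fˣ, a ^ p = u := by
  obtain ⟨g, hg⟩ := IsCyclic.exists_generator (α := Fˣ)
  obtain ⟨t, ht⟩ := (mem_powers_iff_mem_zpowers).2 (hg u)
  dsimp only at ht
  have h1 : g ^ (t * m) = 1 := by rw [pow_mul, ht, hu]
  have h2 : orderOf g ∣ t * m := orderOf_dvd_of_pow_eq_one h1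
  have h3 : orderOf g = p * m := by
    rw [orderOf_eq_card_of_forall_mem_zpowers hg, Nat.card_eq_fintype_card, hcard]
  have h4 : p ∣ t := Nat.dvd_of_mul_dvd_mul_right hm (h3 ▸ h2)
  refine ⟨g ^ (t / p), ?_⟩
  rw [← pow_mul, Nat.div_mul_cancel h4, ht]

private lemma main_count (q : ℕ) (hq : q = Fintype.card F) :
    Nat.card {v : Fin (q - 1) → F //
        ∃ k : ℕ, 1 < k ∧ k ∣ q - 1 ∧ ∃ α : F, α ≠ 0 ∧
          ∀ x : F, x ^ k = α ^ k → ∑ i, v i * x ^ (i : ℕ) = 0} ≤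
      ∑ p ∈ (q - 1).primeFactors, ((q - 1) / p) * q ^ (q - 1 - p) := by
  classical
  set n := q - 1 with hn
  have hq2 : 2 ≤ q := hq ▸ Fintype.one_lt_card
  have hn1 : 1 ≤ n := by omega
  have hunits : Fintype.card Fˣ = n := by rw [Fintype.card_units, ← hq]
  set Pred : (Fin n → F) → Prop := fun v =>
    ∃ k : ℕ, 1 < k ∧ k ∣ n ∧ ∃ α : F, α ≠ 0 ∧
      ∀ x : F, x ^ k = α ^ k → ∑ i, v i * x ^ (i : ℕ) = 0 with hPred
  set Sf : Finset (Fin n → F) := univ.filter Pred with hSf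
  have hS : Nat.card {v : Fin n → F // Pred v} = Sf.card := by
    rw [Nat.card_eq_fintype_card, Fintype.card_subtype]
  set A : ℕ → F → Finset (Fin n → F) := fun p β =>
    univ.filter (fun v => ∀ x : F, x ^ p = β → ∑ i, v i * x ^ (i : ℕ) = 0) with hA
  set B : ℕ → Finset F := fun p =>
    univ.filter (fun β => β ≠ 0 ∧ β ^ (n / p) = 1) with hB
  -- step 1 : covering
  have hcover : Sf ⊆ n.primeFactors.biUnion (fun p => (B p).biUnion (fun β => A p β)) := by
    intro v hv
    rw [hSf, mem_filter] at hv
    obtain ⟨-, k, hk1, hkd, α, hα, hvan⟩ := hv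
    have hp : k.minFac.Prime := Nat.minFac_prime (by omega)
    have hpk : k.minFac ∣ k := Nat.minFac_dvd k
    have hpn : k.minFac ∣ n := hpk.trans hkd
    rw [mem_biUnion]
    refine ⟨k.minFac, Nat.mem_primeFactors.2 ⟨hp, hpn, by omega⟩, ?_⟩
    rw [mem_biUnion]
    refine ⟨α ^ k.minFac, ?_, ?_⟩
    · rw [hB, mem_filter]
      refine ⟨mem_univ _, pow_ne_zero _ hα, ?_⟩
      rw [← pow_mul, Nat.mul_div_cancel' hpn]
      have := FiniteField.pow_card_sub_one_eq_one α hα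
      rwa [← hq] at this
    · rw [hA, mem_filter]
      refine ⟨mem_univ _, fun x hx => ?_⟩
      apply hvan
      calc x ^ k = (x ^ k.minFac) ^ (k / k.minFac) := by
            rw [← pow_mul, Nat.mul_div_cancel' hpk]
        _ = (α ^ k.minFac) ^ (k / k.minFac) := by rw [hx]
        _ = α ^ k := by rw [← pow_mul, Nat.mul_div_cancel' hpk]
  -- step 2a : B card bound
  have hBcard : ∀ p ∈ n.primeFactors, (B p).card ≤ n / p := by
    intro p hp
    obtain ⟨hpp, hpn, -⟩ := Nat.mem_primeFactors.1 hp
    have hm : 0 < n / p := Nat.div_pos (Nat.le_of_dvd (by omega) hpn) hpp.pos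
    have hsub : B p ⊆ (nthRoots (n / p) (1 : F)).toFinset := by
      intro β hβ
      rw [hB, mem_filter] at hβ
      rw [Multiset.mem_toFinset, mem_nthRoots hm]
      exact hβ.2.2
    calc (B p).card ≤ (nthRoots (n / p) (1 : F)).toFinset.card := card_le_card hsub
      _ ≤ Multiset.card (nthRoots (n / p) (1 : F)) := Multiset.toFinset_card_le _
      _ ≤ n / p := Polynomial.card_nthRoots _ _
  -- step 2b : A card bound
  have hAcard : ∀ p ∈ n.primeFactors, ∀ β ∈ B p, (A p β).card ≤ q ^ (n - p) := by
    intro p hp β hβ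
    obtain ⟨hpp, hpn, -⟩ := Nat.mem_primeFactors.1 hp
    have hple : p ≤ n := Nat.le_of_dvd (by omega) hpn
    rw [hB, mem_filter] at hβ
    obtain ⟨-, hβ0, hβm⟩ := hβ
    -- primitive p-th root of unity
    obtain ⟨ζu, hord⟩ : ∃ ζu : Fˣ, orderOf ζu = p := by
      have hcard := IsCyclic.card_orderOf_eq_totient (α := Fˣ) (d := p)
        (by rw [hunits]; exact hpn)
      have hne : ({a : Fˣ | orderOf a = p} : Finset Fˣ).Nonempty := by
        rw [← Finset.card_pos, hcard]
        exact Nat.totient_pos.2 hpp.pos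
      obtain ⟨ζu, hζu⟩ := hne
      exact ⟨ζu, by simpa using hζu⟩
    have hζ : IsPrimitiveRoot (ζu : F) p :=
      IsPrimitiveRoot.coe_units_iff.2 (hord ▸ IsPrimitiveRoot.orderOf ζu)
    -- find p-th root of β
    have hmul : p * (n / p) = n := Nat.mul_div_cancel' hpn
    set u : Fˣ := Units.mk0 β hβ0 with hu
    have hum : u ^ (n / p) = 1 := by
      ext
      push_cast [hu]
      exact hβm
    obtain ⟨a, ha⟩ := exists_pow_root (Nat.div_pos hple hpp.pos) (by rw [hunits, hmul]) u hum
    have hα0 : (a : F) ≠ 0 := a.ne_zero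
    have hαp : (a : F) ^ p = β := by
      have := congrArg (Units.val) ha
      push_cast at this
      simpa [hu] using this
    set R : Finset F := (Finset.range p).image (fun i => (ζu : F) ^ i * (a : F)) with hR
    have hRcard : R.card = p := by
      rw [hR, Finset.card_image_of_injOn (hζ.injOn_pow_mul hα0), Finset.card_range]
    have hsub : A p β ⊆ univ.filter (fun v => ∀ x ∈ R, ∑ i, v i * x ^ (i : ℕ) = 0) := by
      intro v hv
      rw [hA, mem_filter] at hv
      rw [mem_filter]
      refine ⟨mem_univ _, fun x hx => ?_⟩
      rw [hR, mem_image] at hx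
      obtain ⟨i, -, rfl⟩ := hx
      apply hv.2
      calc ((ζu : F) ^ i * (a : F)) ^ p = ((ζu : F) ^ p) ^ i * (a : F) ^ p := by ring
        _ = β := by rw [hζ.pow_eq_one, one_pow, one_mul, hαp]
    calc (A p β).card ≤ (univ.filter (fun v : Fin n → F =>
          ∀ x ∈ R, ∑ i, v i * x ^ (i : ℕ) = 0)).card := card_le_card hsub
      _ = Nat.card {v : Fin n → F // ∀ x ∈ R, ∑ i, v i * x ^ (i : ℕ) = 0} := by
          rw [Nat.card_eq_fintype_card, Fintype.card_subtype]
      _ = Fintype.card F ^ (n - R.card) := card_vanishing n R (hRcard ▸ hple)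
      _ = q ^ (n - p) := by rw [hRcard, ← hq]
  -- combine
  calc Nat.card {v : Fin n → F // Pred v} = Sf.card := hS
    _ ≤ (n.primeFactors.biUnion (fun p => (B p).biUnion (fun β => A p β))).card :=
        card_le_card hcover
    _ ≤ ∑ p ∈ n.primeFactors, ((B p).biUnion (fun β => A p β)).card := card_biUnion_le
    _ ≤ ∑ p ∈ n.primeFactors, ∑ β ∈ B p, (A p β).card :=
        Finset.sum_le_sum (fun p _ => card_biUnion_le)
    _ ≤ ∑ p ∈ n.primeFactors, (n / p) * q ^ (n - p) := by
        refine Finset.sum_le_sum (fun p hp => ?_)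
        calc ∑ β ∈ B p, (A p β).card ≤ ∑ _β ∈ B p, q ^ (n - p) :=
              Finset.sum_le_sum (hAcard p hp)
          _ = (B p).card * q ^ (n - p) := by rw [Finset.sum_const, smul_eq_mul]
          _ ≤ (n / p) * q ^ (n - p) := Nat.mul_le_mul_right _ (hBcard p hp)

end auxmain


private lemma real_part (q : ℕ) (hq2 : 2 ≤ q) (N : ℕ)
    (hN : N ≤ ∑ p ∈ (q - 1).primeFactors, ((q - 1) / p) * q ^ (q - 1 - p)) :
    (N : ℝ) / (q : ℝ) ^ (q - 1) ≤ 1 / (q : ℝ) + Real.log q / (q : ℝ) ^ 2 := by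
  set n := q - 1 with hn
  set PF := n.primeFactors with hPF
  have hq0 : (0 : ℝ) < q := by positivity
  have hq1 : (1 : ℝ) ≤ q := by exact_mod_cast (by omega : 1 ≤ q)
  have hqn : (0 : ℝ) < (q : ℝ) ^ n := by positivity
  have hmem : ∀ p ∈ PF, 2 ≤ p ∧ p ≤ n := by
    intro p hp
    obtain ⟨hpp, hpd, hne⟩ := Nat.mem_primeFactors.1 hp
    exact ⟨hpp.two_le, Nat.le_of_dvd (Nat.pos_of_ne_zero hne) hpd⟩
  have key1 : (N : ℝ) ≤ (∑ p ∈ PF, (1 / (q : ℝ)) ^ (p - 1)) * (q : ℝ) ^ n := by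
    have hcast : (N : ℝ) ≤ ∑ p ∈ PF, ((n / p : ℕ) : ℝ) * (q : ℝ) ^ (n - p) := by
      calc (N : ℝ) ≤ ((∑ p ∈ PF, (n / p) * q ^ (n - p) : ℕ) : ℝ) := by exact_mod_cast hN
        _ = ∑ p ∈ PF, ((n / p : ℕ) : ℝ) * (q : ℝ) ^ (n - p) := by push_cast; ring
    refine hcast.trans ?_
    rw [Finset.sum_mul]
    refine Finset.sum_le_sum (fun p hp => ?_)
    obtain ⟨hp2, hpn⟩ := hmem p hp
    have h1 : ((n / p : ℕ) : ℝ) ≤ (q : ℝ) := by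
      exact_mod_cast (le_trans (Nat.div_le_self n p) (by omega : n ≤ q))
    have h3 : (q : ℝ) * (q : ℝ) ^ (n - p) = (1 / (q : ℝ)) ^ (p - 1) * (q : ℝ) ^ n := by
      have e : (q : ℝ) ^ n = (q : ℝ) ^ (p - 1) * ((q : ℝ) * (q : ℝ) ^ (n - p)) := by
        rw [← pow_succ', ← pow_add]
        congr 1
        omega
      rw [e, one_div, inv_pow, inv_mul_cancel_left₀ (pow_ne_zero _ (by positivity))]
    calc ((n / p : ℕ) : ℝ) * (q : ℝ) ^ (n - p) ≤ (q : ℝ) * (q : ℝ) ^ (n - p) :=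
          mul_le_mul_of_nonneg_right h1 (by positivity)
      _ = (1 / (q : ℝ)) ^ (p - 1) * (q : ℝ) ^ n := h3
  have hscard : ((PF.erase 2).card : ℝ) ≤ Real.log q := by
    set s := (PF.erase 2).card with hs
    have h3s : 3 ^ s ≤ q := by
      have hdvd : ∏ p ∈ PF.erase 2, p ∣ n :=
        dvd_trans (Finset.prod_dvd_prod_of_subset _ _ _ (Finset.erase_subset _ _))
          (Nat.prod_primeFactors_dvd _)
      have hle : ∏ p ∈ PF.erase 2, p ≤ n := Nat.le_of_dvd (by omega) hdvd
      have h3 : 3 ^ s ≤ ∏ p ∈ PF.erase 2, p := by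
        rw [hs, ← Finset.prod_const]
        refine Finset.prod_le_prod' (fun p hp => ?_)
        obtain ⟨hne, hp⟩ := Finset.mem_erase.1 hp
        have := (hmem p hp).1
        have := (Nat.mem_primeFactors.1 hp).1.two_le
        omega
      omega
    have h31 : (1 : ℝ) ≤ Real.log 3 := by
      rw [← Real.log_exp 1]
      apply Real.log_le_log (Real.exp_pos 1)
      linarith [Real.exp_one_lt_d9]
    calc (s : ℝ) = s * 1 := (mul_one _).symm
      _ ≤ s * Real.log 3 := mul_le_mul_of_nonneg_left h31 (by positivity)
      _ = Real.log ((3 : ℝ) ^ s) := by rw [Real.log_pow]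
      _ ≤ Real.log q := Real.log_le_log (by positivity) (by exact_mod_cast h3s)
  have key2 : ∑ p ∈ PF, (1 / (q : ℝ)) ^ (p - 1) ≤ 1 / q + Real.log q / (q : ℝ) ^ 2 := by
    have hsub : PF ⊆ insert 2 (PF.erase 2) := by
      intro x hx
      rcases eq_or_ne x 2 with rfl | h
      · exact Finset.mem_insert_self _ _
      · exact Finset.mem_insert_of_mem (Finset.mem_erase.2 ⟨h, hx⟩)
    have hq1' : 1 / (q : ℝ) ≤ 1 := by
      rw [div_le_one hq0]; exact hq1
    calc ∑ p ∈ PF, (1 / (q : ℝ)) ^ (p - 1)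
        ≤ ∑ p ∈ insert 2 (PF.erase 2), (1 / (q : ℝ)) ^ (p - 1) :=
          Finset.sum_le_sum_of_subset_of_nonneg hsub (fun i _ _ => by positivity)
      _ = (1 / (q : ℝ)) ^ (2 - 1) + ∑ p ∈ PF.erase 2, (1 / (q : ℝ)) ^ (p - 1) :=
          Finset.sum_insert (Finset.notMem_erase _ _)
      _ ≤ 1 / q + ((PF.erase 2).card : ℝ) * (1 / (q : ℝ)) ^ 2 := by
          refine add_le_add (by norm_num) ?_
          calc ∑ p ∈ PF.erase 2, (1 / (q : ℝ)) ^ (p - 1)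
              ≤ ∑ _p ∈ PF.erase 2, (1 / (q : ℝ)) ^ 2 := by
                refine Finset.sum_le_sum (fun p hp => ?_)
                obtain ⟨hne, hpPF⟩ := Finset.mem_erase.1 hp
                have h2 := (hmem p hpPF).1
                exact pow_le_pow_of_le_one (by positivity) hq1' (by omega)
            _ = ((PF.erase 2).card : ℝ) * (1 / (q : ℝ)) ^ 2 := by
                rw [Finset.sum_const, nsmul_eq_mul]
      _ ≤ 1 / q + Real.log q / (q : ℝ) ^ 2 := by
          refine add_le_add le_rfl ?_
          rw [div_pow, one_pow, mul_one_div]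
          exact (div_le_div_iff_of_pos_right (by positivity)).2 hscard
  calc (N : ℝ) / (q : ℝ) ^ n ≤ ((∑ p ∈ PF, (1 / (q : ℝ)) ^ (p - 1)) * (q : ℝ) ^ n) / (q : ℝ) ^ n := by
        gcongr
    _ = ∑ p ∈ PF, (1 / (q : ℝ)) ^ (p - 1) := by field_simp
    _ ≤ 1 / q + Real.log q / (q : ℝ) ^ 2 := key2

theorem stmt16 (F : Type*) [Field F] [Fintype F] (q : ℕ) (hq : q = Fintype.card F) :
    Nat.card {v : Fin (q - 1) → F //
        ∃ k : ℕ, 1 < k ∧ k ∣ q - 1 ∧ ∃ α : F, α ≠ 0 ∧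
          ∀ x : F, x ^ k = α ^ k → ∑ i, v i * x ^ (i : ℕ) = 0} ≤
      ∑ p ∈ (q - 1).primeFactors, ((q - 1) / p) * q ^ (q - 1 - p) ∧
    ((Nat.card {v : Fin (q - 1) → F //
        ∃ k : ℕ, 1 < k ∧ k ∣ q - 1 ∧ ∃ α : F, α ≠ 0 ∧
          ∀ x : F, x ^ k = α ^ k → ∑ i, v i * x ^ (i : ℕ) = 0} : ℝ) / (q : ℝ) ^ (q - 1) ≤
      1 / (q : ℝ) + Real.log q / (q : ℝ) ^ 2) := by
  classical
  have hq2 : 2 ≤ q := by rw [hq]; exact Fintype.one_lt_card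
  have h1 := main_count (F := F) q hq
  exact ⟨h1, real_part q hq2 _ h1⟩
end
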